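/- Let $\mathcal{G} = \langle r, s : r^{2^k p} = s^2 = e, \ s r s^{-1} = r^{2^{k-1}p - 1} \rangle$ with $k \ge 2$ and $p$ an odd prime. Then the power graph $P(\mathcal{G})$ is isomorphic to the disjoint union of: the power graph of the cyclic group $\mathbb{Z}_{2^k p}$ together with attached structure, specifically $P(\mathcal{G}) \cong P(\mathbb{Z}_{2^k p}) \cup 2^{k-1}p\, K_2 \cup 2^{k-2}p\,(P(\langle r^{2^{k-1}p}\rangle) + K_2)$, where the unions identify the common vertices $e$ (and $e, r^{2^{k-1}p}$ respectively) appropriately. -/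

import Mathlib

inductive Gen : Type
  | r | s

open FreeGroup in
def grpRels (k p : ℕ) : Set (FreeGroup Gen) :=
  {of Gen.r ^ (2 ^ k * p), of Gen.s ^ 2,
   of Gen.s * of Gen.r * (of Gen.s)⁻¹ * (of Gen.r ^ (2 ^ (k - 1) * p - 1))⁻¹}

abbrev GKP (k p : ℕ) := PresentedGroup (grpRels k p)

def rG (k p : ℕ) : GKP k p := PresentedGroup.of Gen.r
def sG (k p : ℕ) : GKP k p := PresentedGroup.of Gen.s

def powerGraph (G : Type*) [Group G] : SimpleGraph G where
  Adj x y := x ≠ y ∧ ((∃ m : ℕ, 0 < m ∧ y = x ^ m) ∨ ∃ m : ℕ, 0 < m ∧ x = y ^ m)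
  symm := ⟨fun _ _ h => ⟨h.1.symm, h.2.symm⟩⟩
  loopless := ⟨fun _ h => h.1 rfl⟩

/-- Vertex set of the model graph: the cyclic group Z_{2^k p}, together with
2^{k-1} p pendant vertices, and 2^{k-2} p pairs forming K_2's joined to {e, u}. -/
abbrev ModelV (k p : ℕ) : Type :=
  Multiplicative (ZMod (2 ^ k * p)) ⊕ (Fin (2 ^ (k - 1) * p) ⊕ Fin (2 ^ (k - 2) * p) × Fin 2)

/-- The model graph: P(Z_{2^k p}) ∪ 2^{k-1}p K_2 ∪ 2^{k-2}p (P(⟨u⟩) + K_2),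
where the unions identify e (resp. e and u = 2^{k-1}p) appropriately. -/
def modelGraph (k p : ℕ) : SimpleGraph (ModelV k p) :=
  SimpleGraph.fromRel fun x y =>
    match x, y with
    | Sum.inl a, Sum.inl b => (powerGraph (Multiplicative (ZMod (2 ^ k * p)))).Adj a b
    | Sum.inl a, Sum.inr (Sum.inl _) => a = 1
    | Sum.inl a, Sum.inr (Sum.inr _) =>
        a = 1 ∨ a = Multiplicative.ofAdd ((2 ^ (k - 1) * p : ℕ) : ZMod (2 ^ k * p))
    | Sum.inr (Sum.inr ji), Sum.inr (Sum.inr ji') => ji.1 = ji'.1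
    | _, _ => False

/-!
Write `N = 2^k p` and `c = N / 2`. The relations present the semidirect product `ℤ/N ⋊ ℤ/2` in
which the generator of `ℤ/2` acts by multiplication by `t = c - 1`, an involution of `ℤ/N` since
`2c = 0` and `c² = 0`. No positive power of a rotation `r^b` is a reflection `r^a s`, and
`(r^a s)² = r^(ca)`, which is `e` for even `a` and the central involution `u = r^c` for odd `a`.
So the even reflections are pendant vertices at `e`, while the odd ones split into pairs
`{x, u x}` whose positive powers are `{e, u, x, u x}`: each pair is a `K₂` joined to `{e, u}`.
-/

open Multiplicative SemidirectProduct

theorem exists_pos_pow_eq_iff_exists_lt {M : Type*} [Monoid M] {x y : M} {n : ℕ} (hn : 0 < n) (hx : x ^ n = 1) :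
    (∃ m, 0 < m ∧ y = x ^ m) ↔ ∃ m < n, y = x ^ m := by
  constructor
  · rintro ⟨m, -, rfl⟩
    exact ⟨m % n, Nat.mod_lt m hn, pow_eq_pow_mod m hx⟩
  · rintro ⟨m, -, rfl⟩
    rcases m.eq_zero_or_pos with rfl | hm
    · exact ⟨n, hn, by rw [pow_zero, hx]⟩
    · exact ⟨m, hm, rfl⟩

section PowerGraph

variable {G H : Type*} [Group G] [Group H]

theorem powerGraph_adj_map_iff {f : G →* H} (hf : Function.Injective f) {a b : G} :
    (powerGraph H).Adj (f a) (f b) ↔ (powerGraph G).Adj a b := by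
  simp only [powerGraph, ← map_pow, hf.ne_iff, hf.eq_iff]

def MulEquiv.powerGraphIso (e : G ≃* H) : powerGraph G ≃g powerGraph H :=
  ⟨e.toEquiv, powerGraph_adj_map_iff (f := e.toMonoidHom) e.injective⟩

end PowerGraph

section ZModHom

variable {G : Type*} [Group G] {n : ℕ}

def zmodHomOfPowEqOne (g : G) (hg : g ^ n = 1) : Multiplicative (ZMod n) →* G :=
  AddMonoidHom.toMultiplicativeLeft <| ZMod.lift n
    ⟨zmultiplesHom _ (Additive.ofMul g), by simp [← ofMul_pow, hg]⟩

@[simp]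
theorem zmodHomOfPowEqOne_ofAdd_natCast (g : G) (hg : g ^ n = 1) (m : ℕ) :
    zmodHomOfPowEqOne g hg (ofAdd (m : ZMod n)) = g ^ m := by
  simp only [zmodHomOfPowEqOne, AddMonoidHom.toMultiplicativeLeft_apply_apply, toAdd_ofAdd]
  rw [← Int.cast_natCast (R := ZMod n) m, ZMod.lift_coe]
  simp

@[simp]
theorem zmodHomOfPowEqOne_ofAdd_one (g : G) (hg : g ^ n = 1) :
    zmodHomOfPowEqOne g hg (ofAdd 1) = g := by
  simpa using zmodHomOfPowEqOne_ofAdd_natCast g hg 1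

theorem zmodHom_ext {f f' : Multiplicative (ZMod n) →* G}
    (h : f (ofAdd 1) = f' (ofAdd 1)) : f = f' := by
  refine MonoidHom.ext fun x => ?_
  obtain ⟨z, hz⟩ := ZMod.intCast_surjective (toAdd x)
  have hx : x = ofAdd (1 : ZMod n) ^ z := by rw [← ofAdd_zsmul, zsmul_one, hz, ofAdd_toAdd]
  rw [hx, map_zpow, map_zpow, h]

end ZModHom

section

variable {n : ℕ} (t : ZMod n) (ht : t * t = 1)

def mulInvolution : MulAut (Multiplicative (ZMod n)) :=
  AddEquiv.toMultiplicative
    { toFun := (t * ·)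
      invFun := (t * ·)
      left_inv := fun a => by simp [← mul_assoc, ht]
      right_inv := fun a => by simp [← mul_assoc, ht]
      map_add' := mul_add t }

def metacyclicAction : Multiplicative (ZMod 2) →* MulAut (Multiplicative (ZMod n)) :=
  zmodHomOfPowEqOne (mulInvolution t ht) <| by
    ext a
    simp [pow_two, mulInvolution, ← mul_assoc, ht]

theorem metacyclicAction_ofAdd_one (a : ZMod n) :
    metacyclicAction t ht (ofAdd 1) (ofAdd a) = ofAdd (t * a) := by
  simp [metacyclicAction, mulInvolution]

abbrev Metacyclic : Type :=
  Multiplicative (ZMod n) ⋊[metacyclicAction t ht] Multiplicative (ZMod 2)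

namespace Metacyclic

variable {t ht}

-- `rot a` is `r^a` and `reflection a` is `r^a s`.
def rot (a : ZMod n) : Metacyclic t ht := inl (ofAdd a)

def reflection (a : ZMod n) : Metacyclic t ht := ⟨ofAdd a, ofAdd 1⟩

@[simp]
theorem rot_zero : (rot 0 : Metacyclic t ht) = 1 := rfl

theorem rot_pow (a : ZMod n) (m : ℕ) : (rot a : Metacyclic t ht) ^ m = rot (m • a) := by
  rw [rot, rot, ← map_pow]; rfl

theorem reflection_zero : (reflection 0 : Metacyclic t ht) = inr (ofAdd 1) := rfl

theorem rot_injective : Function.Injective (rot : ZMod n → Metacyclic t ht) :=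
  inl_injective.comp ofAdd.injective

theorem reflection_injective : Function.Injective (reflection : ZMod n → Metacyclic t ht) :=
  fun _ _ h => ofAdd.injective (congrArg SemidirectProduct.left h)

theorem rot_ne_reflection (a b : ZMod n) : (rot a : Metacyclic t ht) ≠ reflection b := by
  intro h
  exact (by decide : (1 : Multiplicative (ZMod 2)) ≠ ofAdd 1) (congrArg right h)

theorem rot_mul_reflection (a b : ZMod n) :
    (rot a * reflection b : Metacyclic t ht) = reflection (a + b) := by
  ext <;> simp [rot, reflection]

theorem reflection_mul_rot (a b : ZMod n) :
    (reflection a * rot b : Metacyclic t ht) = reflection (a + t * b) := by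
  ext <;> simp [rot, reflection, metacyclicAction_ofAdd_one]

theorem reflection_mul_reflection (a b : ZMod n) :
    (reflection a * reflection b : Metacyclic t ht) = rot (a + t * b) := by
  ext
  · simp [reflection, rot, metacyclicAction_ofAdd_one]
  · exact (by decide : (ofAdd 1 * ofAdd 1 : Multiplicative (ZMod 2)) = 1)

theorem reflection_zero_mul_rot_mul_inv (a : ZMod n) :
    (reflection 0 * rot a * (reflection 0)⁻¹ : Metacyclic t ht) = rot (t * a) := by
  have hinv : (reflection 0 : Metacyclic t ht)⁻¹ = reflection 0 :=
    inv_eq_of_mul_eq_one_right (by simp [reflection_mul_reflection])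
  rw [hinv, reflection_mul_rot, reflection_mul_reflection, zero_add, mul_zero, add_zero]

end Metacyclic

end

section Presentation

variable {k p : ℕ}

theorem mk_eq_one_of_mem_grpRels {x : FreeGroup Gen} (h : x ∈ grpRels k p) :
    PresentedGroup.mk (grpRels k p) x = 1 :=
  (QuotientGroup.eq_one_iff _).mpr (Subgroup.subset_normalClosure h)

theorem rG_pow_eq_one : rG k p ^ (2 ^ k * p) = 1 := by
  simpa [rG, PresentedGroup.of] using
    mk_eq_one_of_mem_grpRels (k := k) (p := p) (Set.mem_insert _ _)

theorem sG_sq_eq_one : sG k p ^ 2 = 1 := by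
  simpa [sG, PresentedGroup.of] using
    mk_eq_one_of_mem_grpRels (k := k) (p := p) (Set.mem_insert_of_mem _ (Set.mem_insert _ _))

theorem sG_mul_rG_mul_inv :
    sG k p * rG k p * (sG k p)⁻¹ = rG k p ^ (2 ^ (k - 1) * p - 1) := by
  simpa [rG, sG, PresentedGroup.of, mul_inv_eq_one] using mk_eq_one_of_mem_grpRels (k := k) (p := p)
    (Set.mem_insert_of_mem _ (Set.mem_insert_of_mem _ rfl))

variable {t : ZMod (2 ^ k * p)} (ht : t * t = 1)
  (he : ((2 ^ (k - 1) * p - 1 : ℕ) : ZMod (2 ^ k * p)) = t)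
include he

def toMetacyclic : GKP k p →* Metacyclic t ht :=
  PresentedGroup.toGroup (f := fun | .r => Metacyclic.rot 1 | .s => Metacyclic.reflection 0) <| by
    rintro x (rfl | rfl | rfl)
    · simp [Metacyclic.rot_pow]
    · simp [pow_two, Metacyclic.reflection_mul_reflection]
    · simp [Metacyclic.rot_pow, Metacyclic.reflection_zero_mul_rot_mul_inv, he]

@[simp] theorem toMetacyclic_rG : toMetacyclic ht he (rG k p) = Metacyclic.rot 1 :=
  PresentedGroup.toGroup.of _

@[simp] theorem toMetacyclic_sG : toMetacyclic ht he (sG k p) = Metacyclic.reflection 0 :=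
  PresentedGroup.toGroup.of _

def ofMetacyclic : Metacyclic t ht →* GKP k p :=
  lift (zmodHomOfPowEqOne (rG k p) rG_pow_eq_one) (zmodHomOfPowEqOne (sG k p) sG_sq_eq_one) <| by
    have h2 : ∀ g : Multiplicative (ZMod 2), g = 1 ∨ g = ofAdd 1 := by decide
    rintro g
    rcases h2 g with rfl | rfl <;> refine zmodHom_ext ?_
    · simp
    · simp [metacyclicAction_ofAdd_one, ← he, sG_mul_rG_mul_inv]

def presentationEquiv : GKP k p ≃* Metacyclic t ht :=
  MonoidHom.toMulEquiv (toMetacyclic ht he) (ofMetacyclic ht he)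
    (PresentedGroup.ext fun
      | .r => show ofMetacyclic ht he (toMetacyclic ht he (rG k p)) = rG k p by
          simp [ofMetacyclic, Metacyclic.rot]
      | .s => show ofMetacyclic ht he (toMetacyclic ht he (sG k p)) = sG k p by
          simp [ofMetacyclic, Metacyclic.reflection_zero])
    (hom_ext (zmodHom_ext (by simp [ofMetacyclic, Metacyclic.rot]))
      (zmodHom_ext (by simp [ofMetacyclic, Metacyclic.reflection_zero])))

end Presentation

namespace Metacyclic

variable {n : ℕ} {c : ZMod n} {ht : (c - 1) * (c - 1) = 1}

theorem reflection_ne_one (a : ZMod n) : (reflection a : Metacyclic (c - 1) ht) ≠ 1 :=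
  (rot_ne_reflection 0 a).symm

theorem reflection_sq (a : ZMod n) :
    (reflection a : Metacyclic (c - 1) ht) ^ 2 = rot (c * a) := by
  rw [pow_two, reflection_mul_reflection]
  ring_nf

variable (hc : c + c = 0)
include hc

theorem reflection_pow_four (a : ZMod n) : (reflection a : Metacyclic (c - 1) ht) ^ 4 = 1 := by
  rw [show 4 = 2 * 2 from rfl, pow_mul, reflection_sq, rot_pow, two_nsmul, ← add_mul, hc,
    zero_mul, rot_zero]

theorem exists_pos_pow_reflection_iff {a : ZMod n} {y : Metacyclic (c - 1) ht} :
    (∃ m, 0 < m ∧ y = reflection a ^ m) ↔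
      y = 1 ∨ y = reflection a ∨ y = rot (c * a) ∨ y = reflection (c * a + a) := by
  have h3 : (reflection a : Metacyclic (c - 1) ht) ^ 3 = reflection (c * a + a) := by
    rw [pow_succ, reflection_sq, rot_mul_reflection]
  rw [exists_pos_pow_eq_iff_exists_lt four_pos (reflection_pow_four hc a)]
  constructor
  · rintro ⟨m, hm, rfl⟩
    interval_cases m <;> simp [reflection_sq, h3]
  · rintro (rfl | rfl | rfl | rfl)
    exacts [⟨0, by norm_num, rfl⟩, ⟨1, by norm_num, (pow_one _).symm⟩,
      ⟨2, by norm_num, (reflection_sq a).symm⟩, ⟨3, by norm_num, h3.symm⟩]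

theorem powerGraph_adj_rot_reflection_iff {a b : ZMod n} :
    (powerGraph (Metacyclic (c - 1) ht)).Adj (rot b) (reflection a) ↔ b = 0 ∨ b = c * a := by
  have hrot : ¬ ∃ m, 0 < m ∧ (reflection a : Metacyclic (c - 1) ht) = rot b ^ m := by
    rintro ⟨m, -, h⟩
    exact rot_ne_reflection _ _ (h.trans (rot_pow b m)).symm
  simp only [powerGraph, exists_pos_pow_reflection_iff hc, hrot, false_or, ne_eq,
    rot_ne_reflection, not_false_eq_true, true_and, or_false, ← rot_zero, rot_injective.eq_iff]

theorem powerGraph_adj_reflection_reflection_iff {a b : ZMod n} :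
    (powerGraph (Metacyclic (c - 1) ht)).Adj (reflection a) (reflection b) ↔
      a ≠ b ∧ (b = c * a + a ∨ a = c * b + b) := by
  simp only [powerGraph, exists_pos_pow_reflection_iff hc, reflection_ne_one, ne_eq,
    reflection_injective.eq_iff, (rot_ne_reflection _ _).symm, false_or]
  tauto

end Metacyclic

section Model

variable {k p : ℕ}

theorem two_pow_mul_eq_two_mul (hk : 1 ≤ k) (p : ℕ) : 2 ^ k * p = 2 * (2 ^ (k - 1) * p) := by
  obtain ⟨k, rfl⟩ := Nat.exists_eq_add_of_le' hk
  rw [Nat.add_sub_cancel, pow_succ]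
  ring

theorem two_pow_pred_mul_eq_two_mul (hk : 2 ≤ k) (p : ℕ) :
    2 ^ (k - 1) * p = 2 * (2 ^ (k - 2) * p) := by
  rw [two_pow_mul_eq_two_mul (k := k - 1) (by omega), Nat.sub_sub]

def half (k p : ℕ) : ZMod (2 ^ k * p) := (2 ^ (k - 1) * p : ℕ)

theorem half_add_half (hk : 1 ≤ k) : half k p + half k p = 0 := by
  rw [half, ← Nat.cast_add, ← two_mul, ← two_pow_mul_eq_two_mul hk, ZMod.natCast_self]

theorem half_mul_two_mul (hk : 1 ≤ k) (m : ZMod (2 ^ k * p)) : half k p * (2 * m) = 0 := by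
  rw [mul_left_comm, two_mul, ← add_mul, half_add_half hk, zero_mul]

theorem half_sub_one_mul_self (hk : 2 ≤ k) : (half k p - 1) * (half k p - 1) = 1 := by
  have hsq : half k p * half k p = 0 := by
    nth_rw 2 [half]
    rw [two_pow_pred_mul_eq_two_mul hk, Nat.cast_mul, Nat.cast_ofNat]
    exact half_mul_two_mul (k := k) (by omega) _
  linear_combination hsq - half_add_half (k := k) (p := p) (by omega)

abbrev ReflectionLabel (k p : ℕ) : Type :=
  Fin (2 ^ (k - 1) * p) ⊕ Fin (2 ^ (k - 2) * p) × Fin 2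

/- `.inl i` labels the involution `r^(2i) s` and `.inr (j, e)` the element
`r^(2(j + 2^(k-2) p e) + 1) s` of order 4; on labels, `partner` is multiplication by the central
involution `u = r^(2^(k-1) p)` (see `half_mul_add_reflectionIndex`). -/
def reflectionIndex : ReflectionLabel k p → ℕ
  | .inl i => 2 * i
  | .inr je => 2 * finProdFinEquiv je.swap + 1

def partner : ReflectionLabel k p → ReflectionLabel k p
  | .inl i => .inl i
  | .inr (j, e) => .inr (j, e.rev)

theorem reflectionIndex_injective : Function.Injective (reflectionIndex (k := k) (p := p)) := by
  rintro (i | x) (i' | y) h <;> simp only [reflectionIndex] at h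
  · exact congrArg Sum.inl (Fin.ext (by omega))
  · omega
  · omega
  · exact congrArg Sum.inr (Prod.swap_injective (finProdFinEquiv.injective (Fin.ext (by omega))))

variable (hk : 2 ≤ k)
include hk

theorem reflectionIndex_lt (x : ReflectionLabel k p) : reflectionIndex x < 2 ^ k * p := by
  have hN := two_pow_mul_eq_two_mul (k := k) (by omega) p
  have hc := two_pow_pred_mul_eq_two_mul hk p
  rcases x with i | je
  · have := i.isLt
    simp only [reflectionIndex]
    omega
  · have := (finProdFinEquiv je.swap).isLt
    simp only [reflectionIndex]
    omega

theorem natCast_reflectionIndex_inj {x y : ReflectionLabel k p} :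
    (reflectionIndex x : ZMod (2 ^ k * p)) = reflectionIndex y ↔ x = y := by
  rw [ZMod.natCast_eq_natCast_iff', Nat.mod_eq_of_lt (reflectionIndex_lt hk x),
    Nat.mod_eq_of_lt (reflectionIndex_lt hk y), reflectionIndex_injective.eq_iff]

theorem half_mul_reflectionIndex_inl (i : Fin (2 ^ (k - 1) * p)) :
    half k p * (reflectionIndex (.inl i : ReflectionLabel k p) : ZMod (2 ^ k * p)) = 0 := by
  rw [reflectionIndex, Nat.cast_mul, Nat.cast_ofNat, half_mul_two_mul (by omega)]

theorem half_mul_reflectionIndex_inr (je : Fin (2 ^ (k - 2) * p) × Fin 2) :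
    half k p * (reflectionIndex (.inr je : ReflectionLabel k p) : ZMod (2 ^ k * p)) =
      half k p := by
  rw [reflectionIndex, Nat.cast_add, Nat.cast_mul, Nat.cast_ofNat, Nat.cast_one, mul_add,
    half_mul_two_mul (by omega), zero_add, mul_one]

theorem half_mul_add_reflectionIndex (x : ReflectionLabel k p) :
    half k p * reflectionIndex x + reflectionIndex x =
      (reflectionIndex (partner x) : ZMod (2 ^ k * p)) := by
  rcases x with i | ⟨j, e⟩
  · rw [half_mul_reflectionIndex_inl hk, zero_add]
    rfl
  · have hN := two_pow_mul_eq_two_mul (k := k) (by omega) p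
    have hc := two_pow_pred_mul_eq_two_mul hk p
    rw [half_mul_reflectionIndex_inr hk, half, ← Nat.cast_add]
    fin_cases e
    · congr 1
      show 2 ^ (k - 1) * p + (2 * (j + 2 ^ (k - 2) * p * 0) + 1) =
        2 * (j + 2 ^ (k - 2) * p * 1) + 1
      omega
    · rw [← zero_add (reflectionIndex (partner _) : ZMod (2 ^ k * p)),
        ← ZMod.natCast_self (2 ^ k * p), ← Nat.cast_add]
      congr 1
      show 2 ^ (k - 1) * p + (2 * (j + 2 ^ (k - 2) * p * 1) + 1) =
        2 ^ k * p + (2 * (j + 2 ^ (k - 2) * p * 0) + 1)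
      omega

end Model

section ModelIso

variable {k p : ℕ} (ht : (half k p - 1) * (half k p - 1) = 1)

def ofModel : ModelV k p → Metacyclic (half k p - 1) ht
  | .inl a => Metacyclic.rot (toAdd a)
  | .inr x => Metacyclic.reflection (reflectionIndex x)

theorem modelGraph_adj_inl_inl_iff {a b : Multiplicative (ZMod (2 ^ k * p))} :
    (modelGraph k p).Adj (.inl a) (.inl b) ↔ (powerGraph _).Adj a b := by
  simp only [modelGraph, SimpleGraph.fromRel_adj, ne_eq, Sum.inl.injEq,
    SimpleGraph.adj_comm _ b a, or_self]
  exact and_iff_right_of_imp SimpleGraph.Adj.ne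

theorem modelGraph_adj_inr_inr_iff {x y : ReflectionLabel k p} :
    (modelGraph k p).Adj (.inr x) (.inr y) ↔ x ≠ y ∧ (y = partner x ∨ x = partner y) := by
  have hrev : ∀ e e' : Fin 2, e' = e.rev ↔ e ≠ e' := by decide
  rcases x with i | ⟨j, e⟩ <;> rcases y with i' | ⟨j', e'⟩ <;>
    simp only [modelGraph, SimpleGraph.fromRel_adj, partner, ne_eq, Sum.inr.injEq, Sum.inl.injEq,
      reduceCtorEq, Prod.mk.injEq, hrev, or_self, and_false, false_iff]
  all_goals tauto

theorem modelGraph_adj_inl_inr_iff {a : Multiplicative (ZMod (2 ^ k * p))}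
    {i : Fin (2 ^ (k - 1) * p)} :
    (modelGraph k p).Adj (.inl a) (.inr (.inl i)) ↔ a = 1 := by
  simp [modelGraph]

theorem modelGraph_adj_inl_inr_inr_iff {a : Multiplicative (ZMod (2 ^ k * p))}
    {je : Fin (2 ^ (k - 2) * p) × Fin 2} :
    (modelGraph k p).Adj (.inl a) (.inr (.inr je)) ↔ a = 1 ∨ a = ofAdd (half k p) := by
  simp [modelGraph, half]

variable (hk : 2 ≤ k)
include hk

theorem powerGraph_adj_ofModel_inl_inr_iff {a : Multiplicative (ZMod (2 ^ k * p))}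
    {x : ReflectionLabel k p} :
    (powerGraph _).Adj (ofModel ht (.inl a)) (ofModel ht (.inr x)) ↔
      (modelGraph k p).Adj (.inl a) (.inr x) := by
  simp only [ofModel,
    Metacyclic.powerGraph_adj_rot_reflection_iff (half_add_half (k := k) (by omega))]
  rcases x with i | je
  · rw [half_mul_reflectionIndex_inl hk, modelGraph_adj_inl_inr_iff, or_self, toAdd_eq_zero]
  · rw [half_mul_reflectionIndex_inr hk, modelGraph_adj_inl_inr_inr_iff, toAdd_eq_zero]
    exact Iff.rfl

theorem powerGraph_adj_ofModel_inr_inr_iff {x y : ReflectionLabel k p} :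
    (powerGraph _).Adj (ofModel ht (.inr x)) (ofModel ht (.inr y)) ↔
      (modelGraph k p).Adj (.inr x) (.inr y) := by
  simp only [ofModel,
    Metacyclic.powerGraph_adj_reflection_reflection_iff (half_add_half (k := k) (by omega)),
    half_mul_add_reflectionIndex hk, ne_eq, natCast_reflectionIndex_inj hk,
    modelGraph_adj_inr_inr_iff]

theorem powerGraph_adj_ofModel_iff (x y : ModelV k p) :
    (powerGraph _).Adj (ofModel ht x) (ofModel ht y) ↔ (modelGraph k p).Adj x y := by
  rcases x with a | x <;> rcases y with b | y
  · exact powerGraph_adj_map_iff inl_injective |>.trans modelGraph_adj_inl_inl_iff.symm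
  · exact powerGraph_adj_ofModel_inl_inr_iff ht hk
  · rw [SimpleGraph.adj_comm, (modelGraph k p).adj_comm]
    exact powerGraph_adj_ofModel_inl_inr_iff ht hk
  · exact powerGraph_adj_ofModel_inr_inr_iff ht hk

theorem ofModel_injective : Function.Injective (ofModel ht) := by
  rintro (a | x) (b | y) h <;> simp only [ofModel] at h
  · exact congrArg Sum.inl (Metacyclic.rot_injective h)
  · exact absurd h (Metacyclic.rot_ne_reflection _ _)
  · exact absurd h.symm (Metacyclic.rot_ne_reflection _ _)
  · exact congrArg Sum.inr
      ((natCast_reflectionIndex_inj hk).mp (Metacyclic.reflection_injective h))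

theorem ofModel_bijective [NeZero p] : Function.Bijective (ofModel ht) := by
  have hN := two_pow_mul_eq_two_mul (k := k) (by omega) p
  have hc := two_pow_pred_mul_eq_two_mul hk p
  have hcard : Nat.card (Metacyclic (half k p - 1) ht) = 2 ^ k * p * 2 := by
    simp [SemidirectProduct.card]
  have : Finite (Metacyclic (half k p - 1) ht) :=
    Nat.finite_of_card_ne_zero (hcard ▸ NeZero.ne _)
  refine (ofModel_injective ht hk).bijective_of_nat_card_le ?_
  simp [hcard]
  omega

noncomputable def modelIso [NeZero p] :
    modelGraph k p ≃g powerGraph (Metacyclic (half k p - 1) ht) where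
  toEquiv := Equiv.ofBijective (ofModel ht) (ofModel_bijective ht hk)
  map_rel_iff' := powerGraph_adj_ofModel_iff ht hk _ _

end ModelIso

theorem powerGraph_structure_general (k p : ℕ) (hk : 2 ≤ k) (hp : p.Prime) :
    Nonempty (powerGraph (GKP k p) ≃g modelGraph k p) := by
  have : NeZero p := ⟨hp.ne_zero⟩
  have he : ((2 ^ (k - 1) * p - 1 : ℕ) : ZMod (2 ^ k * p)) = half k p - 1 := by
    rw [Nat.cast_sub NeZero.one_le, Nat.cast_one]
    rfl
  exact ⟨(presentationEquiv (half_sub_one_mul_self hk) he).powerGraphIso.trans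
    (modelIso (half_sub_one_mul_self hk) hk).symm⟩

theorem powerGraph_structure (k p : ℕ) (hk : 2 ≤ k) (hp : p.Prime) (hodd : Odd p) :
    Nonempty (powerGraph (GKP k p) ≃g modelGraph k p) :=
  powerGraph_structure_general k p hk hp
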